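/- Two times the ground state energy of H_{k,α} is bounded above by the sum of Dirichlet ground energies of the two outer path segments: 2 λ_0(V_k, α) ≤ λ_0(V_{k+r_min}, ∞δ_0) + λ_0(V_{k-r_max}, ∞δ_0) for all sufficiently large k. -/

import Mathlib

open Finset Filter Topology Matrix

/-- The (Neumann) discrete Laplacian matrix of the path graph with `n` vertices. -/
noncomputable def pathLap (n : ℕ) : Matrix (Fin n) (Fin n) ℝ :=
  Matrix.of fun i j =>
    if i = j then (if i.val = 0 ∨ i.val = n - 1 then (1 : ℝ) else 2)
    else if i.val + 1 = j.val ∨ j.val + 1 = i.val then -1 else 0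

/-- The diagonal potential matrix: vertex `i` of `Fin (2k+1)` represents the integer `i - k`. -/
noncomputable def potMat (k : ℕ) (α : ℤ → ℝ) : Matrix (Fin (2*k+1)) (Fin (2*k+1)) ℝ :=
  Matrix.diagonal fun i => α ((i : ℤ) - k)

/-- The discrete Schrödinger operator `H_{k,α} = L_k + Σ_j α_j δ_j` on the path `{-k,…,k}`. -/
noncomputable def Hmat (k : ℕ) (α : ℤ → ℝ) : Matrix (Fin (2*k+1)) (Fin (2*k+1)) ℝ :=
  pathLap (2*k+1) + potMat k α

/-- The set of eigenvalues of a real matrix. -/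
def evs {n : ℕ} (M : Matrix (Fin n) (Fin n) ℝ) : Set ℝ :=
  {μ | ∃ f : Fin n → ℝ, f ≠ 0 ∧ M.mulVec f = μ • f}

/-- Lowest eigenvalue. -/
noncomputable def lam0 {n : ℕ} (M : Matrix (Fin n) (Fin n) ℝ) : ℝ := sInf (evs M)

/-- Second-lowest eigenvalue (lowest eigenvalue above the ground state energy). -/
noncomputable def lam1 {n : ℕ} (M : Matrix (Fin n) (Fin n) ℝ) : ℝ :=
  sInf (evs M \ {lam0 M})

/-- Spectral gap. -/
noncomputable def gap {n : ℕ} (M : Matrix (Fin n) (Fin n) ℝ) : ℝ := lam1 M - lam0 M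

/-- `λ_0(V_m, ∞δ_0) = 2 - 2cos(π/(2m+1))`, the Dirichlet ground state energy. -/
noncomputable def dirEVZ (m : ℤ) : ℝ := 2 - 2 * Real.cos (Real.pi / (2 * m + 1))

/-- Index of the integer vertex `j ∈ {-k,…,k}` inside `Fin (2k+1)`. -/
def idx (k : ℕ) (j : ℤ) : Fin (2*k+1) := ⟨(j + k).toNat % (2*k+1), Nat.mod_lt _ (by omega)⟩

/-- `φ` is the normalized strictly positive ground state of `H_{k,α}`. -/
noncomputable def isGS (k : ℕ) (α : ℤ → ℝ) (φ : Fin (2*k+1) → ℝ) : Prop :=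
  (Hmat k α).mulVec φ = lam0 (Hmat k α) • φ ∧ (∑ i, φ i ^ 2 = 1) ∧ ∀ i, 0 < φ i

/-- The single-site potential `α δ_0`. -/
noncomputable def single0 (α : ℝ) : ℤ → ℝ := fun j => if j = 0 then α else 0

/-!
The ground state energy is bounded by the Rayleigh quotient of any nonzero trial vector. With
`m = k + r_min`, the vector `t ↦ cos ((t + 1/2) π / (2m + 1))` on the first `m` vertices of the
path, extended by zero, sees no potential, is even about `t = -1/2` (the free end) and vanishes at
`t = m`; hence `H φ = (2 - 2 cos (π / (2m + 1))) φ` holds at every vertex of its support, and its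
Rayleigh quotient is the Dirichlet energy of the left segment. The reflection `j ↦ -j` gives the
same bound for the right segment.
-/

section Spectrum

variable {n : ℕ}

theorem evs_eq_spectrum (M : Matrix (Fin n) (Fin n) ℝ) : evs M = spectrum ℝ M := by
  ext μ
  rw [← Matrix.spectrum_toLin', ← Module.End.hasEigenvalue_iff_mem_spectrum]
  constructor
  · rintro ⟨f, hf, hfμ⟩
    exact Module.End.hasEigenvalue_of_hasEigenvector ⟨Module.End.mem_eigenspace_iff.2 hfμ, hf⟩
  · intro hμ
    obtain ⟨f, hf⟩ := hμ.exists_hasEigenvector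
    exact ⟨f, hf.2, hf.apply_eq_smul⟩

theorem lam0_le_of_mem_spectrum {M : Matrix (Fin n) (Fin n) ℝ} {μ : ℝ} (hμ : μ ∈ spectrum ℝ M) :
    lam0 M ≤ μ := by
  rw [lam0, evs_eq_spectrum]
  exact csInf_le M.finite_real_spectrum.bddBelow hμ

open scoped MatrixOrder in
theorem lam0_mul_dotProduct_self_le {A : Matrix (Fin n) (Fin n) ℝ} (hA : A.IsHermitian)
    (x : Fin n → ℝ) : lam0 A * (x ⬝ᵥ x) ≤ x ⬝ᵥ (A *ᵥ x) := by
  have hle : algebraMap ℝ _ (lam0 A) ≤ A :=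
    (algebraMap_le_iff_le_spectrum hA.isSelfAdjoint).2 fun μ hμ => lam0_le_of_mem_spectrum hμ
  have := (Matrix.le_iff.1 hle).dotProduct_mulVec_nonneg x
  simpa [Matrix.sub_mulVec, Algebra.algebraMap_eq_smul_one, Matrix.smul_mulVec, dotProduct_sub]
    using this

theorem lam0_submatrix_equiv (M : Matrix (Fin n) (Fin n) ℝ) (e : Fin n ≃ Fin n) :
    lam0 (M.submatrix e e) = lam0 M := by
  have : M.submatrix e e = Matrix.reindexAlgEquiv ℝ ℝ e.symm M := rfl
  rw [lam0, lam0, evs_eq_spectrum, evs_eq_spectrum, this, AlgEquiv.spectrum_eq]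

theorem lam0_le_of_mulVec_eq_on_support {A : Matrix (Fin n) (Fin n) ℝ} (hA : A.IsHermitian)
    {f : Fin n → ℝ} (hf : f ≠ 0) {μ : ℝ} (hfμ : ∀ i, f i ≠ 0 → (A *ᵥ f) i = μ * f i) :
    lam0 A ≤ μ := by
  have hquad : f ⬝ᵥ (A *ᵥ f) = μ * (f ⬝ᵥ f) := by
    simp only [dotProduct, Finset.mul_sum]
    refine Finset.sum_congr rfl fun i _ => ?_
    by_cases hi : f i = 0
    · simp [hi]
    · rw [hfμ i hi]; ring
  have hpos : 0 < f ⬝ᵥ f := by simpa using dotProduct_self_star_pos_iff.2 hf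
  exact le_of_mul_le_mul_right (hquad ▸ lam0_mul_dotProduct_self_le hA f) hpos

end Spectrum

theorem Fin.sum_univ_ite_val_eq {M : Type*} [AddCommMonoid M] (n t : ℕ) (c : M) :
    ∑ j : Fin n, (if (j : ℕ) = t then c else 0) = if t < n then c else 0 := by
  rw [Fin.sum_univ_eq_sum_range (fun j => if j = t then c else 0), Finset.sum_ite_eq']
  simp only [Finset.mem_range]

theorem pathLap_mulVec_apply {n : ℕ} (g : ℕ → ℝ) (i : Fin n) :
    (pathLap n *ᵥ fun j => g j) i =
      (if (i : ℕ) = 0 ∨ (i : ℕ) = n - 1 then 1 else 2) * g i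
        - (if (i : ℕ) + 1 < n then g (i + 1) else 0) - (if 0 < (i : ℕ) then g (i - 1) else 0) := by
  have hrow (j : Fin n) : pathLap n i j * g j =
      (if (j : ℕ) = i then (if (i : ℕ) = 0 ∨ (i : ℕ) = n - 1 then 1 else 2) * g i else 0)
        - (if (j : ℕ) = i + 1 then g (i + 1) else 0)
        - (if (j : ℕ) = i - 1 then (if 0 < (i : ℕ) then g (i - 1) else 0) else 0) := by
    obtain ⟨a, ha⟩ := i
    obtain ⟨b, hb⟩ := j
    simp only [pathLap, Matrix.of_apply, Fin.mk.injEq]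
    split_ifs <;> first | omega | (subst_vars; ring)
  simp only [Matrix.mulVec, dotProduct, hrow, Finset.sum_sub_distrib, Fin.sum_univ_ite_val_eq,
    i.isLt, if_true, show (i : ℕ) - 1 < n by omega]

theorem pathLap_isHermitian (n : ℕ) : (pathLap n).IsHermitian := by
  ext i j
  simp only [Matrix.conjTranspose_apply, pathLap, Matrix.of_apply, star_trivial]
  split_ifs <;> simp_all [Fin.ext_iff]

theorem Hmat_isHermitian (k : ℕ) (α : ℤ → ℝ) : (Hmat k α).IsHermitian :=
  (pathLap_isHermitian _).add (Matrix.isHermitian_diagonal _)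

theorem pathLap_submatrix_revPerm (n : ℕ) :
    (pathLap n).submatrix Fin.revPerm Fin.revPerm = pathLap n := by
  ext i j
  have := i.isLt
  have := j.isLt
  simp only [pathLap, Matrix.submatrix_apply, Matrix.of_apply, Fin.revPerm_apply, Fin.ext_iff,
    Fin.val_rev]
  split_ifs <;> first | rfl | omega

theorem Hmat_submatrix_revPerm (k : ℕ) (α : ℤ → ℝ) :
    (Hmat k α).submatrix Fin.revPerm Fin.revPerm = Hmat k (fun j => α (-j)) := by
  change (pathLap _).submatrix _ _ + (potMat k α).submatrix _ _ = _
  rw [pathLap_submatrix_revPerm, potMat, Matrix.submatrix_diagonal_equiv, Hmat, potMat]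
  congr 2
  funext i
  have := i.isLt
  simp only [Function.comp_apply, Fin.revPerm_apply, Fin.val_rev]
  congr 1
  omega

noncomputable def dirichletMode (m t : ℕ) : ℝ :=
  if t < m then Real.cos ((t + 1 / 2) * (Real.pi / (2 * m + 1))) else 0

theorem dirichletMode_of_le {m t : ℕ} (ht : t ≤ m) :
    dirichletMode m t = Real.cos ((t + 1 / 2) * (Real.pi / (2 * m + 1))) := by
  rcases ht.lt_or_eq with ht | rfl
  · rw [dirichletMode, if_pos ht]
  · rw [dirichletMode, if_neg (lt_irrefl _), eq_comm, ← Real.cos_pi_div_two]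
    congr 1
    field_simp

theorem dirichletMode_pos {m t : ℕ} (ht : t < m) : 0 < dirichletMode m t := by
  rw [dirichletMode, if_pos ht]
  have hangle : (t + 1 / 2) * (Real.pi / (2 * m + 1))
      = Real.pi / 2 * ((2 * t + 1) / (2 * m + 1)) := by
    field_simp
  have hratio : ((2 * t + 1) / (2 * m + 1) : ℝ) < 1 :=
    (div_lt_one (by positivity)).2 (by exact_mod_cast (by omega : 2 * t + 1 < 2 * m + 1))
  rw [hangle]
  apply Real.cos_pos_of_mem_Ioo
  constructor
  · have : 0 < Real.pi / 2 * ((2 * t + 1) / (2 * m + 1)) := by positivity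
    linarith [Real.pi_pos]
  · exact mul_lt_of_lt_one_right (by positivity) hratio

theorem dirichletMode_eq_zero {m t : ℕ} (ht : m ≤ t) : dirichletMode m t = 0 := by
  rw [dirichletMode, if_neg (not_lt.2 ht)]

theorem dirichletMode_recurrence {m t : ℕ} (ht : t < m) :
    (if t = 0 then 1 else 2) * dirichletMode m t - dirichletMode m (t + 1)
      - (if 0 < t then dirichletMode m (t - 1) else 0) = dirEVZ m * dirichletMode m t := by
  set θ := Real.pi / (2 * m + 1)
  have hcos (x : ℝ) : Real.cos (x - θ) + Real.cos (x + θ) = 2 * Real.cos θ * Real.cos x := by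
    rw [Real.cos_sub, Real.cos_add]; ring
  have hdir : dirEVZ m = 2 - 2 * Real.cos θ := by simp [dirEVZ, θ]
  rw [hdir, dirichletMode_of_le ht.le, dirichletMode_of_le ht]
  rcases t with _ | s
  · -- `cos` is even, so the free end acts like a mirror-image neighbour at `t = -1`.
    have h := hcos (θ / 2)
    rw [show θ / 2 - θ = -(θ / 2) by ring, Real.cos_neg] at h
    simp only [if_true, lt_irrefl, if_false, Nat.cast_zero, zero_add, Nat.cast_one, sub_zero]
    rw [show (1 + 1 / 2) * θ = θ / 2 + θ by ring, show (1 / 2) * θ = θ / 2 by ring]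
    linarith
  · have h := hcos ((s + 1 + 1 / 2) * θ)
    rw [dirichletMode_of_le (by omega)]
    simp only [Nat.add_one_ne_zero, if_false, Nat.succ_pos, if_true, Nat.add_sub_cancel]
    push_cast
    rw [show (s + 1 + 1 + 1 / 2) * θ = (s + 1 + 1 / 2) * θ + θ by ring,
      show (s + 1 / 2) * θ = (s + 1 + 1 / 2) * θ - θ by ring]
    linarith

theorem Hmat_mulVec_dirichletMode {k m : ℕ} {α : ℤ → ℝ} (hm : m ≤ 2 * k)
    (hα : ∀ j < (m : ℤ) - k, α j = 0) (i : Fin (2 * k + 1)) (hi : (i : ℕ) < m) :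
    (Hmat k α *ᵥ fun j => dirichletMode m j) i = dirEVZ m * dirichletMode m i := by
  have hend : ((i : ℕ) = 0 ∨ (i : ℕ) = 2 * k + 1 - 1) ↔ (i : ℕ) = 0 := by omega
  rw [Hmat, Matrix.add_mulVec, Pi.add_apply, pathLap_mulVec_apply, potMat,
    Matrix.mulVec_diagonal, hα _ (by omega), zero_mul, add_zero]
  simp only [hend, show (i : ℕ) + 1 < 2 * k + 1 by omega, if_true]
  exact dirichletMode_recurrence hi

theorem lam0_Hmat_le_dirEVZ_add {k : ℕ} {α : ℤ → ℝ} {r : ℤ} (hr : -(k : ℤ) < r) (hrk : r ≤ k)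
    (hα : ∀ j < r, α j = 0) : lam0 (Hmat k α) ≤ dirEVZ (k + r) := by
  obtain ⟨m, hm⟩ : ∃ m : ℕ, (k : ℤ) + r = m := ⟨(k + r).toNat, by omega⟩
  rw [hm]
  refine lam0_le_of_mulVec_eq_on_support (Hmat_isHermitian k α)
    (f := fun j => dirichletMode m j) (fun h => ?_) (fun i hi => ?_)
  · exact (dirichletMode_pos (by omega : 0 < m)).ne' (congrFun h ⟨0, by omega⟩)
  · refine Hmat_mulVec_dirichletMode (by omega) (fun j hj => hα j (by omega)) i ?_
    by_contra hmi
    exact hi (dirichletMode_eq_zero (not_lt.1 hmi))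

theorem lam0_Hmat_le_dirEVZ_sub {k : ℕ} {α : ℤ → ℝ} {r : ℤ} (hr : -(k : ℤ) ≤ r) (hrk : r < k)
    (hα : ∀ j > r, α j = 0) : lam0 (Hmat k α) ≤ dirEVZ (k - r) := by
  rw [← lam0_submatrix_equiv _ Fin.revPerm, Hmat_submatrix_revPerm, sub_eq_add_neg]
  exact lam0_Hmat_le_dirEVZ_add (by omega) (by omega) fun j hj => hα (-j) (by omega)

theorem stmt11_general (α : ℤ → ℝ) (J : Finset ℤ) (hne : J.Nonempty)
    (hsupp : ∀ j : ℤ, α j ≠ 0 ↔ j ∈ J) :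
    ∀ᶠ k : ℕ in atTop,
      2 * lam0 (Hmat k α) ≤
        dirEVZ ((k : ℤ) + J.min' hne) + dirEVZ ((k : ℤ) - J.max' hne) := by
  have hbelow : ∀ j < J.min' hne, α j = 0 := fun j hj =>
    not_not.1 fun h => (J.min'_le j ((hsupp j).1 h)).not_gt hj
  have habove : ∀ j > J.max' hne, α j = 0 := fun j hj =>
    not_not.1 fun h => (J.le_max' j ((hsupp j).1 h)).not_gt hj
  filter_upwards [eventually_gt_atTop (J.min' hne).natAbs,
    eventually_gt_atTop (J.max' hne).natAbs] with k hmin hmax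
  linarith [lam0_Hmat_le_dirEVZ_add (k := k) (by omega) (by omega) hbelow,
    lam0_Hmat_le_dirEVZ_sub (k := k) (by omega) (by omega) habove]

/-- `2 λ_0(V_k, α) ≤ λ_0(V_{k+r_min}, ∞δ_0) + λ_0(V_{k-r_max}, ∞δ_0)` for
all sufficiently large `k`. -/
theorem stmt11 (α : ℤ → ℝ) (J : Finset ℤ) (hne : J.Nonempty)
    (hsupp : ∀ j : ℤ, α j ≠ 0 ↔ j ∈ J) (hpos : ∀ j ∈ J, 0 < α j) :
    ∀ᶠ k : ℕ in atTop,
      2 * lam0 (Hmat k α) ≤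
        dirEVZ ((k : ℤ) + J.min' hne) + dirEVZ ((k : ℤ) - J.max' hne) :=
  stmt11_general α J hne hsupp
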